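/- arXiv:1101.4038 — 2 statements merged into one kernel-verified Lean document; each statement's English description precedes it below -/
import Mathlib

section
/- If the accessible region R is closed, then for each i = 1, ..., k the estimator p̂_i(y) = k_i*(y)/k(y), evaluated at the first boundary point y reached by the process, is an unbiased estimator of p_i; that is, ∑_{y ∈ B} (k_i*(y)/k(y)) · k(y) p_1^{y_1} ··· p_k^{y_k} = p_i. -/
/-!
Counting paths by their first step gives `k(y) = ∑ᵢ kᵢ*(y)` at every boundary point `y`, so the
sums `Tᵢ = ∑_{y ∈ B} kᵢ*(y) p^y` add up to the closedness sum `1 = ∑ᵢ pᵢ`. On the other hand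
`Tᵢ ≤ pᵢ`, since `Tᵢ / pᵢ` is the probability that the walk started at `eᵢ` ever exits: because
`∑ⱼ pⱼ = 1`, the weight `∑ p^x` of the paths from `eᵢ` still in `R` at level `n` splits exactly
into the weight of those still in `R` at level `n + 1` and of those exiting at level `n + 1`.
Hence `Tᵢ = pᵢ`, and `Tᵢ` is the expectation of the estimator because `kᵢ* ≤ k` vanishes
wherever `k` does.
-/

open scoped Classical

/-- Number of lattice paths from `a` to `x`, each step adding one standard
basis vector, all of whose points (including the endpoints) lie in `A`. -/
noncomputable def pathCount {k : ℕ} (A : Set (Fin k → ℕ)) (a : Fin k → ℕ)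
    (x : Fin k → ℕ) : ℕ :=
  if x = a then (if a ∈ A then 1 else 0)
  else if x ∈ A then
    ∑ i : Fin k, if h : 0 < x i then pathCount A a (Function.update x i (x i - 1)) else 0
  else 0
termination_by ∑ i, x i
decreasing_by
  have h1 := Finset.sum_update_of_mem (Finset.mem_univ i) x (x i - 1)
  have h2 := Finset.sum_eq_sum_sdiff_singleton_add (Finset.mem_univ i) x
  omega

/-- The boundary `B` of a region `R ⊆ ℕᵏ`: the points not in `R` that can be
reached in one step (addition of one standard basis vector) from a point of `R`. -/
def bdry {k : ℕ} (R : Set (Fin k → ℕ)) : Set (Fin k → ℕ) :=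
  {y | y ∉ R ∧ ∃ x ∈ R, ∃ i : Fin k, y = x + Pi.single i 1}

/-- Number of lattice paths from `a` to `y` all of whose points except `y`
lie in `R`. -/
noncomputable def exitCount {k : ℕ} (R : Set (Fin k → ℕ)) (a y : Fin k → ℕ) : ℕ :=
  pathCount (insert y R) a y

/-- `R ⊆ ℕᵏ` is *simple* if for every `n` the convex hull (in `ℝᵏ`) of
`Rₙ = R ∩ Sₙ` contains no point of `Sₙ = {x ∈ ℕᵏ : ∑ xᵢ = n}` outside `Rₙ`. -/
def IsSimple {k : ℕ} (R : Set (Fin k → ℕ)) : Prop :=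
  ∀ n : ℕ, ∀ x : Fin k → ℕ, ∑ i, x i = n →
    (fun i => (x i : ℝ)) ∈ convexHull ℝ
      ((fun (z : Fin k → ℕ) (i : Fin k) => (z i : ℝ)) ''
        {z : Fin k → ℕ | z ∈ R ∧ ∑ i, z i = n}) →
    x ∈ R

section LatticePaths

variable {k : ℕ}

lemma single_le_of_pos {x : Fin k → ℕ} {i : Fin k} (h : 0 < x i) :
    (Pi.single i 1 : Fin k → ℕ) ≤ x := by
  intro j
  by_cases hj : j = i
  · subst hj; simpa [Nat.one_le_iff_ne_zero, Nat.pos_iff_ne_zero] using h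
  · simp [hj]

lemma sum_add_single (x : Fin k → ℕ) (i : Fin k) :
    ∑ j, (x + Pi.single i 1 : Fin k → ℕ) j = ∑ j, x j + 1 := by
  simp [Finset.sum_add_distrib]

lemma sum_sub_single_add_one {x : Fin k → ℕ} {i : Fin k} (h : 0 < x i) :
    ∑ j, (x - Pi.single i 1 : Fin k → ℕ) j + 1 = ∑ j, x j := by
  rw [← sum_add_single, tsub_add_cancel_of_le (single_le_of_pos h)]

lemma update_sub_one_eq_sub_single (x : Fin k → ℕ) (i : Fin k) :
    Function.update x i (x i - 1) = x - Pi.single i 1 := by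
  funext j
  by_cases hj : j = i
  · subst hj; simp
  · simp [hj]

lemma sub_single_eq_iff {x a : Fin k → ℕ} {i : Fin k} :
    0 < x i ∧ x - Pi.single i 1 = a ↔ x = a + Pi.single i 1 := by
  constructor
  · rintro ⟨hi, rfl⟩
    exact (tsub_add_cancel_of_le (single_le_of_pos hi)).symm
  · rintro rfl
    simp

-- The guard matters: for `x i = 0`, truncated subtraction gives `x - Pi.single i 1 = x`.
def predSum {M : Type*} [AddCommMonoid M] (f : (Fin k → ℕ) → M) (x : Fin k → ℕ) : M :=
  ∑ i, if 0 < x i then f (x - Pi.single i 1) else 0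

lemma predSum_congr {M : Type*} [AddCommMonoid M] {f g : (Fin k → ℕ) → M} {x : Fin k → ℕ}
    (h : ∀ z, ∑ j, z j < ∑ j, x j → f z = g z) : predSum f x = predSum g x := by
  refine Finset.sum_congr rfl fun i _ => ?_
  split_ifs with hi
  · exact h _ (by have := sum_sub_single_add_one hi; omega)
  · rfl

lemma predSum_eq_zero {M : Type*} [AddCommMonoid M] {f : (Fin k → ℕ) → M} {x : Fin k → ℕ}
    (h : ∀ i, 0 < x i → f (x - Pi.single i 1) = 0) : predSum f x = 0 :=
  Finset.sum_eq_zero fun i _ => by split_ifs with hi <;> simp [h i, hi]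

theorem sum_antidiagonalTuple_succ {M : Type*} [AddCommMonoid M]
    (f : (Fin k → ℕ) → (Fin k → ℕ) → M) (n : ℕ) :
    ∑ x ∈ Finset.Nat.antidiagonalTuple k n, ∑ i, f x (x + Pi.single i 1)
      = ∑ y ∈ Finset.Nat.antidiagonalTuple k (n + 1), predSum (fun x => f x y) y := by
  simp only [predSum]
  rw [Finset.sum_comm, Finset.sum_comm (s := Finset.Nat.antidiagonalTuple k (n + 1))]
  refine Finset.sum_congr rfl fun i _ => ?_
  rw [← Finset.sum_filter]
  refine Finset.sum_nbij' (· + Pi.single i 1) (· - Pi.single i 1) ?_ ?_ ?_ ?_ ?_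
  · intro x hx
    rw [Finset.mem_filter, Finset.Nat.mem_antidiagonalTuple, sum_add_single,
      Finset.Nat.mem_antidiagonalTuple.1 hx]
    simp
  · intro y hy
    rw [Finset.mem_filter, Finset.Nat.mem_antidiagonalTuple] at hy
    rw [Finset.Nat.mem_antidiagonalTuple]
    have := sum_sub_single_add_one hy.2
    omega
  · intro x _
    simp
  · intro y hy
    exact tsub_add_cancel_of_le (single_le_of_pos (Finset.mem_filter.1 hy).2)
  · intro x _
    simp

variable {A : Set (Fin k → ℕ)} {a x : Fin k → ℕ}

lemma pathCount_of_ne (hxa : x ≠ a) :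
    pathCount A a x = if x ∈ A then predSum (pathCount A a) x else 0 := by
  rw [pathCount, if_neg hxa]
  simp only [dite_eq_ite, update_sub_one_eq_sub_single, predSum]

lemma pathCount_self : pathCount A a a = if a ∈ A then 1 else 0 := by
  rw [pathCount, if_pos rfl]

lemma pathCount_of_notMem (hx : x ∉ A) : pathCount A a x = 0 := by
  by_cases hxa : x = a
  · rw [hxa, pathCount_self, if_neg (hxa ▸ hx)]
  · rw [pathCount_of_ne hxa, if_neg hx]

lemma pathCount_eq_zero_of_sum_lt (h : ∑ j, x j < ∑ j, a j) : pathCount A a x = 0 := by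
  induction hn : ∑ j, x j using Nat.strong_induction_on generalizing x with
  | _ n ih =>
    have hxa : x ≠ a := by rintro rfl; omega
    rw [pathCount_of_ne hxa]
    split_ifs
    · refine predSum_eq_zero fun i hi => ?_
      have := sum_sub_single_add_one hi
      exact ih _ (by omega) (by omega) rfl
    · rfl

lemma predSum_pathCount_eq_zero_of_sum_le (h : ∑ j, x j ≤ ∑ j, a j) :
    predSum (pathCount A a) x = 0 :=
  predSum_eq_zero fun _ hi =>
    pathCount_eq_zero_of_sum_lt (by have := sum_sub_single_add_one hi; omega)

lemma pathCount_eq_zero_of_sum_le (h : ∑ j, x j ≤ ∑ j, a j) (hxa : x ≠ a) :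
    pathCount A a x = 0 := by
  rw [pathCount_of_ne hxa, predSum_pathCount_eq_zero_of_sum_le h, ite_self]

lemma pathCount_of_mem (hx : x ∈ A) :
    pathCount A a x = (if x = a then 1 else 0) + predSum (pathCount A a) x := by
  by_cases hxa : x = a
  · subst hxa
    rw [pathCount_self, if_pos hx, if_pos rfl, predSum_pathCount_eq_zero_of_sum_le le_rfl]
  · rw [pathCount_of_ne hxa, if_pos hx, if_neg hxa, zero_add]

lemma pathCount_insert_of_sum_lt {y : Fin k → ℕ} (h : ∑ j, x j < ∑ j, y j) :
    pathCount (insert y A) a x = pathCount A a x := by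
  induction hn : ∑ j, x j using Nat.strong_induction_on generalizing x with
  | _ n ih =>
    have hmem : x ∈ insert y A ↔ x ∈ A := by
      rw [Set.mem_insert_iff, or_iff_right]; rintro rfl; omega
    by_cases hxa : x = a
    · rw [hxa] at hmem ⊢
      rw [pathCount_self, pathCount_self, hmem]
    · rw [pathCount_of_ne hxa, pathCount_of_ne hxa, hmem]
      congr 1
      exact predSum_congr fun z hz => ih _ (by omega) (by omega) rfl

lemma pathCount_eq_ite_add_sum_single (ha : a ∈ A) (x : Fin k → ℕ) :
    pathCount A a x = (if x = a then 1 else 0) + ∑ i, pathCount A (a + Pi.single i 1) x := by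
  induction hn : ∑ j, x j using Nat.strong_induction_on generalizing x with
  | _ n ih =>
    by_cases hx : x ∈ A
    swap
    · have hxa : x ≠ a := by rintro rfl; exact hx ha
      simp [pathCount_of_notMem hx, hxa]
    have hstep : ∀ j, (if 0 < x j then pathCount A a (x - Pi.single j 1) else 0)
        = (if x = a + Pi.single j 1 then 1 else 0)
          + ∑ i, if 0 < x j then pathCount A (a + Pi.single i 1) (x - Pi.single j 1) else 0 := by
      intro j
      by_cases hj : 0 < x j
      · have := sum_sub_single_add_one hj
        simp only [← sub_single_eq_iff, hj, true_and]
        exact ih _ (by omega) (x - Pi.single j 1) rfl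
      · have hxa : x ≠ a + Pi.single j 1 := by rintro rfl; simp at hj
        simp [hj, hxa]
    rw [pathCount_of_mem hx]
    simp only [pathCount_of_mem (a := a + Pi.single _ 1) hx, predSum, hstep,
      Finset.sum_add_distrib]
    rw [Finset.sum_comm (s := Finset.univ) (t := Finset.univ)]

lemma add_single_mem_union_bdry {R : Set (Fin k → ℕ)} (hx : x ∈ R) (i : Fin k) :
    x + Pi.single i 1 ∈ R ∪ bdry R := by
  by_cases h : x + Pi.single i 1 ∈ R
  · exact Or.inl h
  · exact Or.inr ⟨h, x, hx, i, rfl⟩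

variable {R : Set (Fin k → ℕ)} {y : Fin k → ℕ}

lemma exitCount_self : exitCount R a a = 1 := by
  rw [exitCount, pathCount_self, if_pos (Set.mem_insert a R)]

lemma exitCount_eq_zero_of_sum_le (h : ∑ j, y j ≤ ∑ j, a j) (hya : y ≠ a) :
    exitCount R a y = 0 :=
  pathCount_eq_zero_of_sum_le h hya

lemma exitCount_eq_sum_add_single (ha : a ∈ R) (hy : y ∈ bdry R) :
    exitCount R a y = ∑ i, exitCount R (a + Pi.single i 1) y := by
  have hya : y ≠ a := by rintro rfl; exact hy.1 ha
  simpa [exitCount, hya] using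
    pathCount_eq_ite_add_sum_single (A := insert y R) (Set.mem_insert_of_mem y ha) y

lemma exitCount_add_single_le (ha : a ∈ R) (hy : y ∈ bdry R) (i : Fin k) :
    exitCount R (a + Pi.single i 1) y ≤ exitCount R a y := by
  rw [exitCount_eq_sum_add_single ha hy]
  exact Finset.single_le_sum (f := fun i => exitCount R (a + Pi.single i 1) y)
    (fun _ _ => Nat.zero_le _) (Finset.mem_univ i)

/-- A path from `a` arriving at `x` either continues inside `R` or exits at `x ∈ bdry R`. -/
lemma predSum_pathCount_eq (h : ∑ j, a j < ∑ j, x j) :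
    predSum (pathCount R a) x = pathCount R a x + if x ∈ bdry R then exitCount R a x else 0 := by
  have hxa : x ≠ a := by rintro rfl; omega
  by_cases hxR : x ∈ R
  · have hxB : x ∉ bdry R := fun hB => hB.1 hxR
    rw [pathCount_of_ne hxa, if_pos hxR, if_neg hxB, add_zero]
  rw [pathCount_of_notMem hxR, zero_add]
  by_cases hxB : x ∈ bdry R
  · rw [if_pos hxB, exitCount, pathCount_of_ne hxa, if_pos (Set.mem_insert x R)]
    exact predSum_congr fun z hz => (pathCount_insert_of_sum_lt hz).symm
  · rw [if_neg hxB]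
    refine predSum_eq_zero fun i hi => pathCount_of_notMem fun hz => hxB
      ⟨hxR, _, hz, i, (tsub_add_cancel_of_le (single_le_of_pos hi)).symm⟩

end LatticePaths

section Weight

variable {k : ℕ} {M : Type*} [CommMonoid M]

def weight (p : Fin k → M) (x : Fin k → ℕ) : M :=
  ∏ j, p j ^ x j

lemma weight_add (p : Fin k → M) (x y : Fin k → ℕ) :
    weight p (x + y) = weight p x * weight p y := by
  simp only [weight, Pi.add_apply, pow_add, Finset.prod_mul_distrib]

lemma weight_single (p : Fin k → M) (i : Fin k) : weight p (Pi.single i 1) = p i := by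
  rw [weight, Finset.prod_eq_single i (fun j _ hj => by simp [hj]) (by simp)]
  simp

lemma weight_nonneg {p : Fin k → ℝ} (hp : ∀ i, 0 ≤ p i) (x : Fin k → ℕ) : 0 ≤ weight p x :=
  Finset.prod_nonneg fun j _ => pow_nonneg (hp j) _

end Weight

section Conservation

open Finset

variable {k : ℕ} {R : Set (Fin k → ℕ)} {a : Fin k → ℕ} {p : Fin k → ℝ}

noncomputable def bdryLevel (R : Set (Fin k → ℕ)) (m : ℕ) : Finset (Fin k → ℕ) :=
  (Nat.antidiagonalTuple k m).filter (· ∈ bdry R)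

lemma mem_bdryLevel {m : ℕ} {y : Fin k → ℕ} : y ∈ bdryLevel R m ↔ ∑ j, y j = m ∧ y ∈ bdry R := by
  rw [bdryLevel, mem_filter, Nat.mem_antidiagonalTuple]

lemma sum_pathCount_weight_succ (hp : ∑ i, p i = 1) {n : ℕ} (hn : ∑ j, a j ≤ n) :
    ∑ x ∈ Nat.antidiagonalTuple k (n + 1), (pathCount R a x : ℝ) * weight p x
      + ∑ y ∈ bdryLevel R (n + 1), (exitCount R a y : ℝ) * weight p y
      = ∑ x ∈ Nat.antidiagonalTuple k n, (pathCount R a x : ℝ) * weight p x := by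
  have hflux : ∀ y ∈ Nat.antidiagonalTuple k (n + 1),
      predSum (fun x => (pathCount R a x : ℝ) * weight p y) y
        = ((pathCount R a y : ℝ) + if y ∈ bdry R then (exitCount R a y : ℝ) else 0)
          * weight p y := by
    intro y hy
    have hlt : ∑ j, a j < ∑ j, y j := by rw [Nat.mem_antidiagonalTuple.1 hy]; omega
    have := congrArg (fun m : ℕ => (m : ℝ) * weight p y) (predSum_pathCount_eq (R := R) hlt)
    simpa [predSum, sum_mul, ite_mul] using this
  symm
  calc ∑ x ∈ Nat.antidiagonalTuple k n, (pathCount R a x : ℝ) * weight p x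
      = ∑ x ∈ Nat.antidiagonalTuple k n, ∑ i,
          (pathCount R a x : ℝ) * weight p (x + Pi.single i 1) := by
        simp only [weight_add, weight_single, ← mul_sum, hp, mul_one]
    _ = ∑ y ∈ Nat.antidiagonalTuple k (n + 1),
          predSum (fun x => (pathCount R a x : ℝ) * weight p y) y :=
        sum_antidiagonalTuple_succ (fun x y => (pathCount R a x : ℝ) * weight p y) n
    _ = _ := by
        rw [sum_congr rfl hflux, bdryLevel, sum_filter, ← sum_add_distrib]
        simp only [add_mul, ite_mul, zero_mul]

lemma sum_pathCount_weight_add_sum_exitCount_weight_start (ha : a ∈ R ∪ bdry R) :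
    ∑ x ∈ Nat.antidiagonalTuple k (∑ j, a j), (pathCount R a x : ℝ) * weight p x
      + ∑ m ∈ range (∑ j, a j + 1), ∑ y ∈ bdryLevel R m,
          (exitCount R a y : ℝ) * weight p y
      = weight p a := by
  have hF : ∑ x ∈ Nat.antidiagonalTuple k (∑ j, a j), (pathCount R a x : ℝ) * weight p x
      = if a ∈ R then weight p a else 0 := by
    rw [sum_eq_single_of_mem a (Nat.mem_antidiagonalTuple.2 rfl) fun x hx hxa => by
      rw [pathCount_eq_zero_of_sum_le (Nat.mem_antidiagonalTuple.1 hx).le hxa, Nat.cast_zero,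
        zero_mul], pathCount_self]
    split_ifs <;> simp
  have hD : ∀ m ∈ range (∑ j, a j + 1),
      ∑ y ∈ bdryLevel R m, (exitCount R a y : ℝ) * weight p y
        = if ∑ j, a j = m then (if a ∈ bdry R then weight p a else 0) else 0 := by
    intro m hm
    have hexit : ∀ y ∈ bdryLevel R m,
        (exitCount R a y : ℝ) * weight p y = if a = y then weight p a else 0 := by
      intro y hy
      rw [mem_bdryLevel] at hy
      split_ifs with hay
      · rw [← hay, exitCount_self, Nat.cast_one, one_mul]
      · rw [exitCount_eq_zero_of_sum_le (by rw [hy.1]; exact Nat.lt_succ_iff.1 (mem_range.1 hm))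
          (Ne.symm hay), Nat.cast_zero, zero_mul]
    rw [sum_congr rfl hexit, sum_ite_eq]
    simp only [mem_bdryLevel, ite_and]
  rw [sum_congr rfl hD, sum_ite_eq, if_pos (self_mem_range_succ _), hF]
  rcases ha with ha | ha
  · rw [if_pos ha, if_neg fun hB => hB.1 ha, add_zero]
  · rw [if_neg ha.1, if_pos ha, zero_add]

/-- Conservation of probability: by level `n` the walk from `a` has either exited through
`bdry R` or is still in `R`. -/
theorem sum_pathCount_weight_add_sum_exitCount_weight (hp : ∑ i, p i = 1)
    (ha : a ∈ R ∪ bdry R) {n : ℕ} (hn : ∑ j, a j ≤ n) :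
    ∑ x ∈ Nat.antidiagonalTuple k n, (pathCount R a x : ℝ) * weight p x
      + ∑ m ∈ range (n + 1), ∑ y ∈ bdryLevel R m,
          (exitCount R a y : ℝ) * weight p y
      = weight p a := by
  induction n, hn using Nat.le_induction with
  | base => exact sum_pathCount_weight_add_sum_exitCount_weight_start ha
  | succ n hn ih =>
    rw [sum_range_succ, ← ih, ← sum_pathCount_weight_succ hp hn]
    ring

lemma sum_exitCount_weight_le (hp₀ : ∀ i, 0 ≤ p i) (hp : ∑ i, p i = 1) (ha : a ∈ R ∪ bdry R)
    (s : Finset (bdry R)) :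
    ∑ y ∈ s, (exitCount R a y : ℝ) * weight p y ≤ weight p a := by
  set n := max (∑ j, a j) (s.sup fun y => ∑ j, (y : Fin k → ℕ) j)
  have hdisj : (range (n + 1) : Set ℕ).PairwiseDisjoint (bdryLevel R) := by
    intro m _ m' _ hne
    refine disjoint_left.2 fun y hy hy' => hne ?_
    rw [mem_bdryLevel] at hy hy'
    rw [← hy.1, hy'.1]
  have hsub : s.map (Function.Embedding.subtype (· ∈ bdry R))
      ⊆ (range (n + 1)).biUnion (bdryLevel R) := by
    intro y hy
    obtain ⟨y, hys, rfl⟩ := mem_map.1 hy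
    refine mem_biUnion.2 ⟨∑ j, (y : Fin k → ℕ) j, mem_range.2 (Nat.lt_succ_of_le ?_),
      mem_bdryLevel.2 ⟨rfl, y.2⟩⟩
    exact (le_sup (f := fun y : bdry R => ∑ j, (y : Fin k → ℕ) j) hys).trans (le_max_right _ _)
  have hnonneg : ∀ x, 0 ≤ (exitCount R a x : ℝ) * weight p x :=
    fun x => mul_nonneg (Nat.cast_nonneg _) (weight_nonneg hp₀ x)
  calc ∑ y ∈ s, (exitCount R a y : ℝ) * weight p y
      = ∑ y ∈ s.map (Function.Embedding.subtype (· ∈ bdry R)),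
          (exitCount R a y : ℝ) * weight p y := by
        rw [sum_map]; rfl
    _ ≤ ∑ y ∈ (range (n + 1)).biUnion (bdryLevel R), (exitCount R a y : ℝ) * weight p y :=
        sum_le_sum_of_subset_of_nonneg hsub fun x _ _ => hnonneg x
    _ = ∑ m ∈ range (n + 1), ∑ y ∈ bdryLevel R m, (exitCount R a y : ℝ) * weight p y :=
        sum_biUnion hdisj
    _ ≤ ∑ x ∈ Nat.antidiagonalTuple k n, (pathCount R a x : ℝ) * weight p x
          + ∑ m ∈ range (n + 1), ∑ y ∈ bdryLevel R m, (exitCount R a y : ℝ) * weight p y :=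
        le_add_of_nonneg_left (sum_nonneg fun x _ =>
          mul_nonneg (Nat.cast_nonneg _) (weight_nonneg hp₀ x))
    _ = weight p a := sum_pathCount_weight_add_sum_exitCount_weight hp ha (le_max_left _ _)

lemma summable_exitCount_weight (hp₀ : ∀ i, 0 ≤ p i) (hp : ∑ i, p i = 1)
    (ha : a ∈ R ∪ bdry R) :
    Summable fun y : bdry R => (exitCount R a y : ℝ) * weight p y :=
  summable_of_sum_le (fun y => mul_nonneg (Nat.cast_nonneg _) (weight_nonneg hp₀ y))
    (sum_exitCount_weight_le hp₀ hp ha)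

lemma tsum_exitCount_weight_le (hp₀ : ∀ i, 0 ≤ p i) (hp : ∑ i, p i = 1)
    (ha : a ∈ R ∪ bdry R) :
    ∑' y : bdry R, (exitCount R a y : ℝ) * weight p y ≤ weight p a :=
  tsum_le_of_sum_le' (weight_nonneg hp₀ a) (sum_exitCount_weight_le hp₀ hp ha)

end Conservation

/-- If the accessible region `R` is closed, then for each `i`
the estimator `p̂ᵢ(y) = kᵢ*(y)/k(y)`, evaluated at the first boundary point
reached, is an unbiased estimator of `pᵢ`:
`∑_{y ∈ B} (kᵢ*(y)/k(y)) · k(y) p₁^{y₁} ⋯ p_k^{y_k} = pᵢ`. -/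
theorem estimator_unbiased {k : ℕ} (p : Fin k → ℝ) (hp : ∀ i, 0 < p i)
    (hsum : ∑ i, p i = 1) (R : Set (Fin k → ℕ)) (h0 : (0 : Fin k → ℕ) ∈ R)
    (hclosed : ∑' y : bdry R,
      (exitCount R 0 (y : Fin k → ℕ) : ℝ) * ∏ j, p j ^ (y : Fin k → ℕ) j = 1)
    (i : Fin k) :
    ∑' y : bdry R,
        ((exitCount R (Pi.single i 1) (y : Fin k → ℕ) : ℝ) /
            (exitCount R 0 (y : Fin k → ℕ) : ℝ)) *
          ((exitCount R 0 (y : Fin k → ℕ) : ℝ) * ∏ j, p j ^ (y : Fin k → ℕ) j)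
      = p i := by
  have hp₀ : ∀ j, 0 ≤ p j := fun j => (hp j).le
  have hstart : ∀ j, (Pi.single j 1 : Fin k → ℕ) ∈ R ∪ bdry R := fun j => by
    simpa using add_single_mem_union_bdry h0 j
  have hsplit : ∀ y ∈ bdry R, exitCount R 0 y = ∑ j, exitCount R (Pi.single j 1) y :=
    fun y hy => by simpa using exitCount_eq_sum_add_single h0 hy
  have hle : ∀ j ∈ Finset.univ,
      ∑' y : bdry R, (exitCount R (Pi.single j 1) y : ℝ) * weight p y ≤ p j := fun j _ =>
    weight_single p j ▸ tsum_exitCount_weight_le hp₀ hsum (hstart j)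
  have htotal : ∑ j, ∑' y : bdry R, (exitCount R (Pi.single j 1) y : ℝ) * weight p y
      = ∑ j, p j := by
    rw [hsum, ← hclosed,
      ← Summable.tsum_finsetSum fun j _ => summable_exitCount_weight hp₀ hsum (hstart j)]
    refine tsum_congr fun y => ?_
    rw [hsplit y y.2, Nat.cast_sum, Finset.sum_mul]
    rfl
  rw [← (Finset.sum_eq_sum_iff_of_le hle).1 htotal i (Finset.mem_univ i)]
  refine tsum_congr fun y => ?_
  rw [← mul_assoc, div_mul_cancel_of_imp fun h => ?_]
  · rfl
  · have hcount : exitCount R (Pi.single i 1) y ≤ exitCount R 0 y := by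
      simpa using exitCount_add_single_le h0 y.2 i
    exact_mod_cast Nat.eq_zero_of_le_zero (hcount.trans (Nat.cast_eq_zero.1 h).le)
end

section
/- Let R ⊂ ℕ^k be a simple region and n an order such that S_n^ℕ contains both points of R_n and points of B_n. Then for any nonempty collection C_n ⊂ B_n of boundary points there exist a point ȳ ∈ C_n, coefficients m_1, ..., m_k ∈ ℕ with at least one m_i = 0 and at least one m_i ≠ 0, and b ∈ ℕ, such that the linear form L(x) = m_1 x_1 + ... + m_k x_k satisfies: (i) L(ȳ) = b; (ii) L(x) ≥ b + 1 for every x ∈ R_n; (iii) L(y) ≥ b + 1 for every y ∈ C_n with y ≠ ȳ. -/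
open scoped Classical

/-!
The points of `Rₙ ∪ Cₙ` all lie in the finite slice `Sₙ`, so their convex hull is a polytope
whose extreme points are among them. By simplicity some point of `Cₙ` lies outside the hull
of `Rₙ`, hence not all extreme points come from `Rₙ`: some `ȳ ∈ Cₙ` is extreme. Hahn–Banach
separates `ȳ` strictly from the other points by a real linear form; scaling it by a large `N`
and rounding the coefficients up keeps the strict inequalities, and subtracting the smallest
coefficient (which changes the form on `Sₙ` by the constant `n` times it) makes the
coefficients natural with one of them zero.
-/

open Filter

section Convex

variable {E : Type*} [AddCommGroup E] [Module ℝ E] [TopologicalSpace E] [T2Space E]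
  [IsTopologicalAddGroup E] [ContinuousSMul ℝ E] [LocallyConvexSpace ℝ E]

theorem Set.Finite.convexHull_extremePoints_convexHull {s : Set E} (hs : s.Finite) :
    convexHull ℝ ((convexHull ℝ s).extremePoints ℝ) = convexHull ℝ s := by
  have hfin : ((convexHull ℝ s).extremePoints ℝ).Finite :=
    hs.subset extremePoints_convexHull_subset
  conv_rhs => rw [← closure_convexHull_extremePoints (hs.isCompact_convexHull ℝ)
    (convex_convexHull ℝ s)]
  rw [(hfin.isClosed_convexHull ℝ).closure_eq]

theorem Set.Finite.exists_mem_extremePoints_convexHull_union {s t : Set E} (hs : s.Finite)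
    (ht : t.Finite) {y : E} (hyt : y ∈ t) (hys : y ∉ convexHull ℝ s) :
    ∃ x ∈ t, x ∈ (convexHull ℝ (s ∪ t)).extremePoints ℝ := by
  by_contra! h
  have hsub : (convexHull ℝ (s ∪ t)).extremePoints ℝ ⊆ s := fun x hx =>
    (extremePoints_convexHull_subset hx).resolve_right fun hxt => h x hxt hx
  have hy : y ∈ convexHull ℝ ((convexHull ℝ (s ∪ t)).extremePoints ℝ) := by
    rw [(hs.union ht).convexHull_extremePoints_convexHull]
    exact subset_convexHull ℝ _ (Or.inr hyt)
  exact hys (convexHull_mono hsub hy)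

theorem Set.Finite.exists_strongDual_lt_of_mem_extremePoints_convexHull {s : Set E}
    (hs : s.Finite) {x : E} (hx : x ∈ (convexHull ℝ s).extremePoints ℝ) :
    ∃ f : StrongDual ℝ E, ∀ y ∈ s, y ≠ x → f x < f y := by
  have hx' : x ∉ convexHull ℝ (s \ {x}) := fun h =>
    ((convex_convexHull ℝ s).mem_extremePoints_iff_mem_sdiff_convexHull_sdiff.1 hx).2
      (convexHull_mono (Set.sdiff_subset_sdiff_left (subset_convexHull ℝ s)) h)
  obtain ⟨f, u, hxu, hu⟩ := geometric_hahn_banach_point_closed (convex_convexHull ℝ _)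
    (hs.sdiff.isClosed_convexHull ℝ) hx'
  exact ⟨f, fun y hy hyx => hxu.trans (hu y (subset_convexHull ℝ _ ⟨hy, hyx⟩))⟩

end Convex

section Weights

variable {ι : Type*} [Fintype ι]

theorem mul_sum_le_sum_ceil_mul (c : ι → ℝ) (N : ℕ) (x : ι → ℕ) :
    N * ∑ i, c i * x i ≤ ∑ i, (⌈N * c i⌉ : ℝ) * x i := by
  rw [Finset.mul_sum]
  refine Finset.sum_le_sum fun i _ => ?_
  rw [← mul_assoc]
  exact mul_le_mul_of_nonneg_right (Int.le_ceil _) (Nat.cast_nonneg _)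

theorem sum_ceil_mul_le (c : ι → ℝ) (N : ℕ) (x : ι → ℕ) :
    ∑ i, (⌈N * c i⌉ : ℝ) * x i ≤ N * ∑ i, c i * x i + ∑ i, (x i : ℝ) := by
  rw [Finset.mul_sum, ← Finset.sum_add_distrib]
  gcongr with i
  have := (Int.ceil_lt_add_one (N * c i)).le
  nlinarith [(Nat.cast_nonneg (x i) : (0 : ℝ) ≤ x i)]

theorem exists_int_weights_lt (f : (ι → ℝ) →ₗ[ℝ] ℝ) (y : ι → ℕ) {P : Set (ι → ℕ)}
    (hP : P.Finite) (hf : ∀ p ∈ P, f (Nat.cast ∘ y) < f (Nat.cast ∘ p)) :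
    ∃ z : ι → ℤ, ∀ p ∈ P, ∑ i, z i * y i < ∑ i, z i * p i := by
  set c : ι → ℝ := fun i => f fun j => if i = j then 1 else 0
  have hc (x : ι → ℕ) : f (Nat.cast ∘ x) = ∑ i, c i * x i := by
    rw [f.pi_apply_eq_sum_univ]
    exact Finset.sum_congr rfl fun i _ => mul_comm _ _
  have hgap : ∀ p ∈ P, ∀ᶠ N : ℕ in atTop,
      ∑ i, (y i : ℝ) < N * (∑ i, c i * p i - ∑ i, c i * y i) := fun p hp =>
    (tendsto_natCast_atTop_atTop.atTop_mul_const
      (sub_pos.2 (by simpa only [hc] using hf p hp))).eventually_gt_atTop _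
  obtain ⟨N, hN⟩ := ((eventually_all_finite hP).2 hgap).exists
  refine ⟨fun i => ⌈N * c i⌉, fun p hp => ?_⟩
  have hy := sum_ceil_mul_le c N y
  have hp' := mul_sum_le_sum_ceil_mul c N p
  have hgap := hN p hp
  rw [mul_sub] at hgap
  exact_mod_cast (show ∑ i, (⌈N * c i⌉ : ℝ) * y i < ∑ i, (⌈N * c i⌉ : ℝ) * p i by linarith)

theorem exists_nat_weights_of_int_weights [Nonempty ι] (z : ι → ℤ) :
    ∃ m : ι → ℕ, ∃ c : ℤ, (∃ i, m i = 0) ∧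
      ∀ x : ι → ℕ, ∑ i, (m i : ℤ) * x i = ∑ i, z i * x i - c * ∑ i, (x i : ℤ) := by
  obtain ⟨i₀, -, hi₀⟩ := Finset.exists_min_image Finset.univ z Finset.univ_nonempty
  refine ⟨fun i => (z i - z i₀).toNat, z i₀, ⟨i₀, by simp⟩, fun x => ?_⟩
  rw [Finset.mul_sum, ← Finset.sum_sub_distrib]
  refine Finset.sum_congr rfl fun i _ => ?_
  rw [Int.toNat_of_nonneg (sub_nonneg.2 (hi₀ i (Finset.mem_univ i)))]
  ring

theorem exists_nat_weights_lt_of_int_weights_lt [Nonempty ι] {n : ℕ} (z : ι → ℤ) (y : ι → ℕ)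
    (hy : ∑ i, y i = n) {P : Set (ι → ℕ)} (hP : ∀ p ∈ P, ∑ i, p i = n)
    (hz : ∀ p ∈ P, ∑ i, z i * y i < ∑ i, z i * p i) :
    ∃ m : ι → ℕ, (∃ i, m i = 0) ∧ ∀ p ∈ P, ∑ i, m i * y i + 1 ≤ ∑ i, m i * p i := by
  obtain ⟨m, c, hm0, hm⟩ := exists_nat_weights_of_int_weights z
  refine ⟨m, hm0, fun p hp => ?_⟩
  have hpn : ∑ i, (p i : ℤ) = n := by exact_mod_cast hP p hp
  have hyn : ∑ i, (y i : ℤ) = n := by exact_mod_cast hy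
  have hzp := hz p hp
  zify
  rw [hm, hm, hpn, hyn]
  linarith

end Weights

theorem separating_form_lemma_general {k : ℕ} (R : Set (Fin k → ℕ))
    (hsimple : IsSimple R) (n : ℕ)
    (hRn : ∃ x ∈ R, ∑ i, x i = n)
    (C : Set (Fin k → ℕ)) (hC : ∀ y ∈ C, y ∈ bdry R ∧ ∑ i, y i = n)
    (hCne : C.Nonempty) :
    ∃ ybar ∈ C, ∃ m : Fin k → ℕ, ∃ b : ℕ,
      (∃ i, m i = 0) ∧ (∃ i, m i ≠ 0) ∧
      (∑ i, m i * ybar i = b) ∧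
      (∀ x ∈ R, ∑ i, x i = n → b + 1 ≤ ∑ i, m i * x i) ∧
      (∀ y ∈ C, y ≠ ybar → b + 1 ≤ ∑ i, m i * y i) := by
  set Rn := {z : Fin k → ℕ | z ∈ R ∧ ∑ i, z i = n}
  set embed : (Fin k → ℕ) → Fin k → ℝ := (Nat.cast ∘ ·)
  have hsum : ∀ z ∈ Rn ∪ C, ∑ i, z i = n := fun z hz =>
    hz.elim And.right fun hzC => (hC z hzC).2
  have hfin : (Rn ∪ C).Finite := (Finset.Nat.antidiagonalTuple k n).finite_toSet.subset
    fun z hz => Finset.Nat.mem_antidiagonalTuple.2 (hsum z hz)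
  obtain ⟨y₀, hy₀⟩ := hCne
  have hy₀R : embed y₀ ∉ convexHull ℝ (embed '' Rn) := fun h =>
    (hC y₀ hy₀).1.1 (hsimple n y₀ (hC y₀ hy₀).2 h)
  obtain ⟨-, ⟨ybar, hybar, rfl⟩, hext⟩ :=
    ((hfin.subset Set.subset_union_left).image embed).exists_mem_extremePoints_convexHull_union
      ((hfin.subset Set.subset_union_right).image embed) (Set.mem_image_of_mem embed hy₀) hy₀R
  rw [← Set.image_union] at hext
  obtain ⟨f, hf⟩ := (hfin.image embed).exists_strongDual_lt_of_mem_extremePoints_convexHull hext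
  obtain ⟨z, hz⟩ := exists_int_weights_lt (f : (Fin k → ℝ) →ₗ[ℝ] ℝ) ybar (hfin.sdiff (t := {ybar}))
    fun p hp => hf _ (Set.mem_image_of_mem embed hp.1) (Nat.cast_injective.comp_left.ne hp.2)
  obtain ⟨hybarR, -, -, i₀, -⟩ := (hC ybar hybar).1
  have : Nonempty (Fin k) := ⟨i₀⟩
  obtain ⟨m, hm0, hm⟩ := exists_nat_weights_lt_of_int_weights_lt z ybar
    (hsum ybar (Or.inr hybar)) (fun p hp => hsum p hp.1) hz
  have hRineq : ∀ x ∈ R, ∑ i, x i = n → ∑ i, m i * ybar i + 1 ≤ ∑ i, m i * x i :=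
    fun x hx hxn => hm x ⟨Or.inl ⟨hx, hxn⟩, fun h => hybarR (h ▸ hx)⟩
  refine ⟨ybar, hybar, m, _, hm0, ?_, rfl, hRineq, fun y hy hne => hm y ⟨Or.inr hy, hne⟩⟩
  by_contra! hm_zero
  obtain ⟨x, hx, hxn⟩ := hRn
  simpa [hm_zero] using hRineq x hx hxn

/-- **separating-form lemma.** Let `R ⊆ ℕᵏ` be a simple region
and `n` an order such that `Sₙ` contains both accessible points (`Rₙ ≠ ∅`) and
boundary points (`Bₙ ≠ ∅`).  Then for any nonempty collection `Cₙ ⊆ Bₙ` there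
are `ȳ ∈ Cₙ`, natural coefficients `m₁, …, m_k` (one vanishing, at least one
non-vanishing) and `b ∈ ℕ` such that `L(x) = ∑ mᵢ xᵢ` satisfies `L(ȳ) = b`,
`L ≥ b + 1` on `Rₙ` and `L ≥ b + 1` on `Cₙ \ {ȳ}`. -/
theorem separating_form_lemma {k : ℕ} (R : Set (Fin k → ℕ))
    (h0 : (0 : Fin k → ℕ) ∈ R) (hsimple : IsSimple R) (n : ℕ)
    (hRn : ∃ x ∈ R, ∑ i, x i = n)
    (hBn : ∃ y ∈ bdry R, ∑ i, y i = n)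
    (C : Set (Fin k → ℕ)) (hC : ∀ y ∈ C, y ∈ bdry R ∧ ∑ i, y i = n)
    (hCne : C.Nonempty) :
    ∃ ybar ∈ C, ∃ m : Fin k → ℕ, ∃ b : ℕ,
      (∃ i, m i = 0) ∧ (∃ i, m i ≠ 0) ∧
      (∑ i, m i * ybar i = b) ∧
      (∀ x ∈ R, ∑ i, x i = n → b + 1 ≤ ∑ i, m i * x i) ∧
      (∀ y ∈ C, y ≠ ybar → b + 1 ≤ ∑ i, m i * y i) :=
  separating_form_lemma_general R hsimple n hRn C hC hCne
end
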